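/- Under the hypotheses of the dual Brunn-Minkowski inequality for copolars (Q₀, Q₁ ⊆ (-∞,0)^n nonempty closed convex complete sets with finite copolar covolumes), if Covol(Q_t°) = Covol(Q₀°)^{1-t} Covol(Q₁°)^t for some t ∈ (0,1), then Q₀ = Q₁. -/

import Mathlib

open MeasureTheory Set

noncomputable section

/-- The open negative orthant `(-∞,0)^n`. -/
def negOrth (n : ℕ) : Set (Fin n → ℝ) := {y | ∀ i, y i < 0}

/-- The nonnegative orthant `[0,∞)^n`. -/
def nonnegOrth (n : ℕ) : Set (Fin n → ℝ) := {x | ∀ i, 0 ≤ x i}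

/-- The nonpositive orthant `(-∞,0]^n`. -/
def nonposOrth (n : ℕ) : Set (Fin n → ℝ) := {v | ∀ i, v i ≤ 0}

/-- The Euclidean pairing `⟨x,y⟩ = ∑ i, x i * y i`. -/
def pairing {n : ℕ} (x y : Fin n → ℝ) : ℝ := ∑ i, x i * y i

/-- Support function `h_Q(x) = sup_{y ∈ Q} ⟨x,y⟩`. -/
def supp {n : ℕ} (Q : Set (Fin n → ℝ)) (x : Fin n → ℝ) : ℝ :=
  sSup ((fun y => pairing x y) '' Q)

/-- Copolar `Q° = {x ∈ [0,∞)^n : ⟨x,y⟩ ≤ -1 ∀ y ∈ Q}`. -/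
def copolar {n : ℕ} (Q : Set (Fin n → ℝ)) : Set (Fin n → ℝ) :=
  {x ∈ nonnegOrth n | ∀ y ∈ Q, pairing x y ≤ -1}

/-- Minkowski combination `(1-t)Q₀ + tQ₁`. -/
def minkComb {n : ℕ} (t : ℝ) (Q₀ Q₁ : Set (Fin n → ℝ)) : Set (Fin n → ℝ) :=
  {z | ∃ a ∈ Q₀, ∃ b ∈ Q₁, z = (1 - t) • a + t • b}

/-!
The layer-cake formula and the positive homogeneity of the support function `h_Q` give
`∫_{(0,∞)^n} exp h_Q = n! · Covol(Q°)`. On the orthant `h_{Q_t} = (1-t) h_{Q₀} + t h_{Q₁}`, so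
the hypothesis says that Hölder's inequality
`∫ e^{(1-t)h₀} e^{t h₁} ≤ (∫ e^{h₀})^{1-t} (∫ e^{h₁})^t` is an equality. Integrating the
weighted AM-GM inequality for the normalised densities `e^{h_j} / ∫ e^{h_j}` shows that
`h₀ - h₁` is almost everywhere, hence by continuity everywhere, constant on the open orthant;
homogeneity makes the constant zero. Finally a closed convex complete subset of the negative
orthant is the intersection of the half-spaces `⟨x, ·⟩ ≤ h_Q(x)` with `x` in the open positive
orthant, because completeness forces every separating functional to have a nonnegative normal.
-/

open scoped Pointwise

namespace MeasureTheory

open Real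

variable {α : Type*} [MeasurableSpace α] {μ : Measure α} {f g : α → ℝ} {t : ℝ}

lemma ae_eq_of_lintegral_geom_mean_eq_one (hf : AEMeasurable f μ) (hg : AEMeasurable g μ)
    (hf₀ : ∀ x, 0 ≤ f x) (hg₀ : ∀ x, 0 ≤ g x) (ht₀ : 0 < t) (ht₁ : t < 1)
    (hf₁ : ∫⁻ x, ENNReal.ofReal (f x) ∂μ = 1) (hg₁ : ∫⁻ x, ENNReal.ofReal (g x) ∂μ = 1)
    (hfg : ∫⁻ x, ENNReal.ofReal (f x ^ (1 - t) * g x ^ t) ∂μ = 1) : f =ᵐ[μ] g := by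
  have ht : 0 < 1 - t := sub_pos.2 ht₁
  have hamgm : ∀ x, f x ^ (1 - t) * g x ^ t ≤ (1 - t) * f x + t * g x := fun x =>
    geom_mean_le_arith_mean2_weighted ht.le ht₀.le (hf₀ x) (hg₀ x) (sub_add_cancel 1 t)
  have harith : ∫⁻ x, ENNReal.ofReal ((1 - t) * f x + t * g x) ∂μ = 1 := by
    simp only [ENNReal.ofReal_add (mul_nonneg ht.le (hf₀ _)) (mul_nonneg ht₀.le (hg₀ _)),
      ENNReal.ofReal_mul ht.le, ENNReal.ofReal_mul ht₀.le]
    rw [lintegral_add_left' (hf.ennreal_ofReal.const_mul _),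
      lintegral_const_mul' _ _ ENNReal.ofReal_ne_top,
      lintegral_const_mul' _ _ ENNReal.ofReal_ne_top,
      hf₁, hg₁, mul_one, mul_one, ← ENNReal.ofReal_add ht.le ht₀.le, sub_add_cancel,
      ENNReal.ofReal_one]
  have hae := ae_eq_of_ae_le_of_lintegral_le
    (ae_of_all _ fun x => ENNReal.ofReal_le_ofReal (hamgm x))
    (by rw [hfg]; exact ENNReal.one_ne_top)
    (((hf.const_mul _).add (hg.const_mul _)).ennreal_ofReal) (harith.trans hfg.symm).le
  filter_upwards [hae] with x hx
  rw [ENNReal.ofReal_eq_ofReal_iff (mul_nonneg (rpow_nonneg (hf₀ x) _) (rpow_nonneg (hg₀ x) _))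
    (add_nonneg (mul_nonneg ht.le (hf₀ x)) (mul_nonneg ht₀.le (hg₀ x)))] at hx
  exact (geom_mean_eq_arith_mean2_weighted_iff_of_pos ht ht₀ (hf₀ x) (hg₀ x)
    (sub_add_cancel 1 t)).1 hx

lemma lintegral_ofReal_div_eq_one {h : α → ℝ} {c : ℝ} (hc : 0 < c)
    (hh : ∫⁻ x, ENNReal.ofReal (h x) ∂μ = ENNReal.ofReal c) :
    ∫⁻ x, ENNReal.ofReal (h x / c) ∂μ = 1 := by
  simp only [div_eq_mul_inv, ENNReal.ofReal_mul' (inv_nonneg.2 hc.le)]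
  rw [lintegral_mul_const' _ _ ENNReal.ofReal_ne_top, hh, ← ENNReal.ofReal_mul hc.le,
    mul_inv_cancel₀ hc.ne', ENNReal.ofReal_one]

lemma ae_div_eq_of_lintegral_geom_mean_eq {A B : ℝ} (hA : 0 < A) (hB : 0 < B)
    (hf : AEMeasurable f μ) (hg : AEMeasurable g μ) (hf₀ : ∀ x, 0 ≤ f x) (hg₀ : ∀ x, 0 ≤ g x)
    (ht₀ : 0 < t) (ht₁ : t < 1) (hfA : ∫⁻ x, ENNReal.ofReal (f x) ∂μ = ENNReal.ofReal A)
    (hgB : ∫⁻ x, ENNReal.ofReal (g x) ∂μ = ENNReal.ofReal B)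
    (hfg : ∫⁻ x, ENNReal.ofReal (f x ^ (1 - t) * g x ^ t) ∂μ
      = ENNReal.ofReal (A ^ (1 - t) * B ^ t)) :
    (fun x => f x / A) =ᵐ[μ] fun x => g x / B := by
  refine ae_eq_of_lintegral_geom_mean_eq_one (hf.div_const A) (hg.div_const B)
    (fun x => div_nonneg (hf₀ x) hA.le) (fun x => div_nonneg (hg₀ x) hB.le) ht₀ ht₁
    (lintegral_ofReal_div_eq_one hA hfA) (lintegral_ofReal_div_eq_one hB hgB) ?_
  simp only [div_rpow (hf₀ _) hA.le, div_rpow (hg₀ _) hB.le, div_mul_div_comm]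
  exact lintegral_ofReal_div_eq_one (by positivity) hfg

end MeasureTheory

namespace Real

lemma image_exp_neg_Ioi : (fun s => exp (-s)) '' Ioi 0 = Ioo 0 1 := by
  ext u
  refine ⟨?_, fun hu => ⟨-log u, neg_pos.2 (log_neg hu.1 hu.2), by simp [exp_log hu.1]⟩⟩
  rintro ⟨s, hs, rfl⟩
  exact ⟨exp_pos _, exp_lt_one_iff.2 (neg_lt_zero.2 hs)⟩

lemma lintegral_Ioo_neg_log_pow (n : ℕ) :
    ∫⁻ u in Ioo 0 1, ENNReal.ofReal ((-log u) ^ n) = n.factorial := by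
  have hderiv : ∀ s ∈ Ioi (0 : ℝ), HasDerivWithinAt (fun s => exp (-s)) (-exp (-s)) (Ioi 0) s :=
    fun s _ => by simpa using (hasDerivAt_neg s).exp.hasDerivWithinAt
  have hinj : InjOn (fun s : ℝ => exp (-s)) (Ioi 0) := (exp_injective.comp neg_injective).injOn
  rw [← image_exp_neg_Ioi, lintegral_image_eq_lintegral_abs_deriv_mul measurableSet_Ioi hderiv hinj]
  have hGamma : ∫ s in Ioi (0 : ℝ), exp (-s) * s ^ n = n.factorial := by
    simpa [← rpow_natCast, Gamma_nat_eq_factorial] using (Gamma_eq_integral n.cast_add_one_pos).symm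
  have hint : IntegrableOn (fun s : ℝ => exp (-s) * s ^ n) (Ioi 0) := by
    simpa [← rpow_natCast] using GammaIntegral_convergent n.cast_add_one_pos
  have hnonneg : 0 ≤ᵐ[volume.restrict (Ioi 0)] fun s : ℝ => exp (-s) * s ^ n :=
    (ae_restrict_iff' measurableSet_Ioi).2 (ae_of_all _ fun s hs =>
      mul_nonneg (exp_pos _).le (pow_nonneg (le_of_lt hs) n))
  simp only [abs_neg, abs_of_pos (exp_pos _), log_exp, neg_neg, ← ENNReal.ofReal_mul (exp_pos _).le]
  rw [← ofReal_integral_eq_lintegral_ofReal hint hnonneg, hGamma, ENNReal.ofReal_natCast]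

end Real

namespace CopolarEquality

open Real

variable {n : ℕ}

def posOrth (n : ℕ) : Set (Fin n → ℝ) := univ.pi fun _ => Ioi 0

lemma mem_posOrth {x : Fin n → ℝ} : x ∈ posOrth n ↔ ∀ i, 0 < x i := by
  simp [posOrth]

lemma isOpen_posOrth : IsOpen (posOrth n) := isOpen_set_pi finite_univ fun _ _ => isOpen_Ioi

lemma measurableSet_posOrth : MeasurableSet (posOrth n) := isOpen_posOrth.measurableSet

lemma posOrth_subset_nonnegOrth : posOrth n ⊆ nonnegOrth n := fun _ hx i => (mem_posOrth.1 hx i).le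

lemma one_mem_posOrth : (1 : Fin n → ℝ) ∈ posOrth n := mem_posOrth.2 fun _ => one_pos

lemma posOrth_ae_eq_nonnegOrth : posOrth n =ᵐ[volume] nonnegOrth n := by
  rw [volume_pi]
  exact Measure.univ_pi_Ioi_ae_eq_Ici (f := 0)

lemma convex_nonnegOrth : Convex ℝ (nonnegOrth n) := convex_Ici 0

lemma convex_nonposOrth : Convex ℝ (nonposOrth n) := convex_Iic 0

lemma negOrth_subset_nonposOrth : negOrth n ⊆ nonposOrth n := fun _ hy i => (hy i).le

lemma dotProduct_nonpos {x y : Fin n → ℝ} (hx : x ∈ nonnegOrth n) (hy : y ∈ nonposOrth n) :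
    x ⬝ᵥ y ≤ 0 :=
  Finset.sum_nonpos fun i _ => mul_nonpos_of_nonneg_of_nonpos (hx i) (hy i)

lemma minkComb_subset {S Q₀ Q₁ : Set (Fin n → ℝ)} (hS : Convex ℝ S) (h₀ : Q₀ ⊆ S) (h₁ : Q₁ ⊆ S)
    {t : ℝ} (ht₀ : 0 ≤ t) (ht₁ : t ≤ 1) : minkComb t Q₀ Q₁ ⊆ S := by
  rintro _ ⟨a, ha, b, hb, rfl⟩
  exact hS (h₀ ha) (h₁ hb) (sub_nonneg.2 ht₁) ht₀ (sub_add_cancel 1 t)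

lemma minkComb_nonempty {Q₀ Q₁ : Set (Fin n → ℝ)} (h₀ : Q₀.Nonempty) (h₁ : Q₁.Nonempty) (t : ℝ) :
    (minkComb t Q₀ Q₁).Nonempty :=
  let ⟨a, ha⟩ := h₀; let ⟨b, hb⟩ := h₁; ⟨_, a, ha, b, hb, rfl⟩

lemma image_dotProduct_minkComb (x : Fin n → ℝ) (t : ℝ) (Q₀ Q₁ : Set (Fin n → ℝ)) :
    (x ⬝ᵥ ·) '' minkComb t Q₀ Q₁ = (1 - t) • ((x ⬝ᵥ ·) '' Q₀) + t • ((x ⬝ᵥ ·) '' Q₁) := by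
  ext r
  simp only [minkComb, mem_image, mem_ofPred_eq, mem_add, mem_smul_set, smul_eq_mul]
  constructor
  · rintro ⟨_, ⟨a, ha, b, hb, rfl⟩, rfl⟩
    exact ⟨_, ⟨_, ⟨a, ha, rfl⟩, rfl⟩, _, ⟨_, ⟨b, hb, rfl⟩, rfl⟩, by
      simp [dotProduct_add, dotProduct_smul]⟩
  · rintro ⟨_, ⟨_, ⟨a, ha, rfl⟩, rfl⟩, _, ⟨_, ⟨b, hb, rfl⟩, rfl⟩, rfl⟩
    exact ⟨_, ⟨a, ha, b, hb, rfl⟩, by simp [dotProduct_add, dotProduct_smul]⟩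

section Support

variable {Q : Set (Fin n → ℝ)} {x y : Fin n → ℝ}

lemma supp_eq_sSup (Q : Set (Fin n → ℝ)) (x : Fin n → ℝ) : supp Q x = sSup ((x ⬝ᵥ ·) '' Q) := rfl

lemma bddAbove_image_dotProduct (hQ : Q ⊆ nonposOrth n) (hx : x ∈ nonnegOrth n) :
    BddAbove ((x ⬝ᵥ ·) '' Q) :=
  ⟨0, by rintro _ ⟨y, hy, rfl⟩; exact dotProduct_nonpos hx (hQ hy)⟩

lemma dotProduct_le_supp (hQ : Q ⊆ nonposOrth n) (hx : x ∈ nonnegOrth n) (hy : y ∈ Q) :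
    x ⬝ᵥ y ≤ supp Q x :=
  le_csSup (bddAbove_image_dotProduct hQ hx) (mem_image_of_mem _ hy)

lemma supp_le (hne : Q.Nonempty) {c : ℝ} (h : ∀ y ∈ Q, x ⬝ᵥ y ≤ c) : supp Q x ≤ c :=
  csSup_le (hne.image _) (forall_mem_image.2 h)

lemma supp_nonpos (hQ : Q ⊆ nonposOrth n) (hx : x ∈ nonnegOrth n) : supp Q x ≤ 0 :=
  Real.sSup_nonpos (forall_mem_image.2 fun _ hy => dotProduct_nonpos hx (hQ hy))

lemma supp_smul (Q : Set (Fin n → ℝ)) {c : ℝ} (hc : 0 ≤ c) (x : Fin n → ℝ) :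
    supp Q (c • x) = c * supp Q x := by
  rw [supp_eq_sSup, supp_eq_sSup, ← smul_eq_mul, ← Real.sSup_smul_of_nonneg hc, ← image_smul,
    image_image]
  simp only [smul_dotProduct, smul_eq_mul]

lemma supp_minkComb {Q₀ Q₁ : Set (Fin n → ℝ)} (h₀ : Q₀ ⊆ nonposOrth n) (h₁ : Q₁ ⊆ nonposOrth n)
    (h₀ne : Q₀.Nonempty) (h₁ne : Q₁.Nonempty) {t : ℝ} (ht₀ : 0 ≤ t) (ht₁ : t ≤ 1)
    (hx : x ∈ nonnegOrth n) :
    supp (minkComb t Q₀ Q₁) x = (1 - t) * supp Q₀ x + t * supp Q₁ x := by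
  rw [supp_eq_sSup, image_dotProduct_minkComb,
    csSup_add ((h₀ne.image _).smul_set) ((bddAbove_image_dotProduct h₀ hx).smul_of_nonneg
      (sub_nonneg.2 ht₁)) ((h₁ne.image _).smul_set)
      ((bddAbove_image_dotProduct h₁ hx).smul_of_nonneg ht₀),
    Real.sSup_smul_of_nonneg (sub_nonneg.2 ht₁), Real.sSup_smul_of_nonneg ht₀]
  rfl

lemma convexOn_supp (hQ : Q ⊆ nonposOrth n) (hne : Q.Nonempty) :
    ConvexOn ℝ (nonnegOrth n) (supp Q) := by
  refine ⟨convex_nonnegOrth, fun x hx z hz a b ha hb _ => supp_le hne fun y hy => ?_⟩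
  rw [add_dotProduct, smul_dotProduct, smul_dotProduct, smul_eq_mul, smul_eq_mul]
  exact add_le_add (mul_le_mul_of_nonneg_left (dotProduct_le_supp hQ hx hy) ha)
    (mul_le_mul_of_nonneg_left (dotProduct_le_supp hQ hz hy) hb)

lemma continuousOn_supp (hQ : Q ⊆ nonposOrth n) (hne : Q.Nonempty) :
    ContinuousOn (supp Q) (posOrth n) :=
  ((convexOn_supp hQ hne).subset posOrth_subset_nonnegOrth
    (convex_pi fun _ _ => convex_Ioi 0)).continuousOn isOpen_posOrth

end Support

section Covolume

variable {Q : Set (Fin n → ℝ)}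

lemma nonnegOrth_diff_copolar (hQ : Q ⊆ nonposOrth n) (hne : Q.Nonempty) :
    nonnegOrth n \ copolar Q = nonnegOrth n ∩ {x | -1 < supp Q x} := by
  ext x
  simp only [copolar, mem_sdiff, mem_inter_iff, mem_ofPred_eq, not_and]
  refine and_congr_right fun hx => ⟨fun h => ?_, fun h _ h' => ?_⟩
  · by_contra! hle
    exact h hx fun y hy => (dotProduct_le_supp hQ hx hy).trans hle
  · exact (h.trans_le (supp_le hne h')).false

lemma volume_nonnegOrth_diff_copolar (hQ : Q ⊆ nonposOrth n) (hne : Q.Nonempty) :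
    volume (nonnegOrth n \ copolar Q) = volume (posOrth n ∩ {x | -1 < supp Q x}) := by
  rw [nonnegOrth_diff_copolar hQ hne]
  exact measure_congr (posOrth_ae_eq_nonnegOrth.inter (ae_eq_refl _)).symm

lemma posOrth_inter_lt_supp_eq_smul {r : ℝ} (hr : 0 < r) :
    posOrth n ∩ {x | -r < supp Q x} = r • (posOrth n ∩ {x | -1 < supp Q x}) := by
  ext x
  rw [mem_smul_set_iff_inv_smul_mem₀ hr.ne']
  simp only [mem_inter_iff, mem_posOrth, mem_ofPred_eq, Pi.smul_apply, smul_eq_mul,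
    supp_smul Q (inv_nonneg.2 hr.le), mul_pos_iff_of_pos_left (inv_pos.2 hr)]
  rw [lt_inv_mul_iff₀ hr, mul_neg_one]

lemma volume_posOrth_inter_lt_supp {r : ℝ} (hr : 0 < r) :
    volume (posOrth n ∩ {x | -r < supp Q x})
      = ENNReal.ofReal (r ^ n) * volume (posOrth n ∩ {x | -1 < supp Q x}) := by
  rw [posOrth_inter_lt_supp_eq_smul hr, Measure.addHaar_smul_of_nonneg volume hr.le,
    Module.finrank_fin_fun]

end Covolume

section LayerCake

variable {Q : Set (Fin n → ℝ)}

lemma volume_restrict_posOrth_lt_exp_supp (hQ : Q ⊆ nonposOrth n) {u : ℝ} (hu : 0 < u) :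
    volume.restrict (posOrth n) {x | u < exp (supp Q x)} = (Ioo 0 1).indicator
      (fun u => ENNReal.ofReal ((-log u) ^ n) * volume (posOrth n ∩ {x | -1 < supp Q x})) u := by
  rw [Measure.restrict_apply' measurableSet_posOrth]
  by_cases hu₁ : u < 1
  · have hset : {x | u < exp (supp Q x)} ∩ posOrth n = posOrth n ∩ {x | -(-log u) < supp Q x} := by
      ext x
      simp only [mem_inter_iff, mem_ofPred_eq, neg_neg, ← log_lt_iff_lt_exp hu, and_comm]
    rw [hset, volume_posOrth_inter_lt_supp (neg_pos.2 (log_neg hu hu₁)),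
      indicator_of_mem (mem_Ioo.2 ⟨hu, hu₁⟩)]
  · have hset : {x | u < exp (supp Q x)} ∩ posOrth n = ∅ := by
      refine eq_empty_of_forall_notMem fun x ⟨hlt, hx⟩ => hu₁ (hlt.trans_le ?_)
      exact exp_le_one_iff.2 (supp_nonpos hQ (posOrth_subset_nonnegOrth hx))
    rw [hset, measure_empty, indicator_of_notMem fun h => hu₁ h.2]

lemma lintegral_exp_supp (hQ : Q ⊆ nonposOrth n) (hne : Q.Nonempty) :
    ∫⁻ x in posOrth n, ENNReal.ofReal (exp (supp Q x))
      = n.factorial * volume (nonnegOrth n \ copolar Q) := by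
  have hm : AEMeasurable (fun x => exp (supp Q x)) (volume.restrict (posOrth n)) :=
    (continuousOn_supp hQ hne).rexp.aemeasurable measurableSet_posOrth
  have hlog : Measurable fun u : ℝ => ENNReal.ofReal ((-log u) ^ n) :=
    (measurable_log.neg.pow_const n).ennreal_ofReal
  rw [lintegral_eq_lintegral_meas_lt _ (ae_of_all _ fun _ => (exp_pos _).le) hm,
    setLIntegral_congr_fun measurableSet_Ioi fun u hu => volume_restrict_posOrth_lt_exp_supp hQ hu,
    setLIntegral_indicator measurableSet_Ioo, inter_eq_left.2 Ioo_subset_Ioi_self,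
    lintegral_mul_const _ hlog, lintegral_Ioo_neg_log_pow, volume_nonnegOrth_diff_copolar hQ hne]

lemma lintegral_exp_supp_eq_ofReal (hQ : Q ⊆ nonposOrth n) (hne : Q.Nonempty)
    (hfin : volume (nonnegOrth n \ copolar Q) ≠ ⊤) :
    ∫⁻ x in posOrth n, ENNReal.ofReal (exp (supp Q x))
      = ENNReal.ofReal (n.factorial * (volume (nonnegOrth n \ copolar Q)).toReal) := by
  rw [lintegral_exp_supp hQ hne, ENNReal.ofReal_mul (Nat.cast_nonneg _), ENNReal.ofReal_natCast,
    ENNReal.ofReal_toReal hfin]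

lemma volume_nonnegOrth_diff_copolar_ne_zero (hQ : Q ⊆ nonposOrth n) (hne : Q.Nonempty) :
    volume (nonnegOrth n \ copolar Q) ≠ 0 := by
  rw [volume_nonnegOrth_diff_copolar hQ hne]
  obtain ⟨ε, hε, hlt⟩ := exists_pos_mul_lt one_pos (-supp Q 1)
  have hmem : ε • 1 ∈ posOrth n ∩ {x | -1 < supp Q x} := by
    refine ⟨mem_posOrth.2 fun _ => by simpa using hε, ?_⟩
    simp only [mem_ofPred_eq, supp_smul Q hε.le]
    linarith
  exact ((continuousOn_supp hQ hne).isOpen_inter_preimage isOpen_posOrth isOpen_Ioi).measure_ne_zero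
    volume ⟨_, hmem⟩

end LayerCake

section Separation

variable {Q : Set (Fin n → ℝ)}

lemma mem_nonnegOrth_of_bddAbove (hcompl : ∀ y ∈ Q, ∀ v ∈ nonposOrth n, y + v ∈ Q)
    (hne : Q.Nonempty) {x : Fin n → ℝ} (hbdd : BddAbove ((x ⬝ᵥ ·) '' Q)) : x ∈ nonnegOrth n := by
  intro i
  by_contra! hxi
  obtain ⟨y, hy⟩ := hne
  obtain ⟨M, hM⟩ := hbdd
  set s := (|M - x ⬝ᵥ y| + 1) / -x i
  have hs : 0 < s := div_pos (by positivity) (neg_pos.2 hxi)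
  have hv : -s • Pi.single i 1 ∈ nonposOrth n := fun j => by
    by_cases hj : j = i <;> simp [hj, hs.le]
  have hle := hM (mem_image_of_mem _ (hcompl y hy _ hv))
  rw [dotProduct_add, dotProduct_smul, dotProduct_single, mul_one, smul_eq_mul] at hle
  have hsx : s * -x i = |M - x ⬝ᵥ y| + 1 := div_mul_cancel₀ _ (neg_pos.2 hxi).ne'
  linarith [le_abs_self (M - x ⬝ᵥ y)]

lemma mem_of_dotProduct_le_supp (hQ : Q ⊆ nonposOrth n) (hne : Q.Nonempty) (hcl : IsClosed Q)
    (hconv : Convex ℝ Q) (hcompl : ∀ y ∈ Q, ∀ v ∈ nonposOrth n, y + v ∈ Q) {y : Fin n → ℝ}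
    (hy : ∀ x ∈ posOrth n, x ⬝ᵥ y ≤ supp Q x) : y ∈ Q := by
  by_contra hyQ
  obtain ⟨f, u, hfQ, hfy⟩ := geometric_hahn_banach_closed_point hconv hcl hyQ
  set x : Fin n → ℝ := fun i => f fun j => if i = j then 1 else 0
  have hf : ∀ z, f z = x ⬝ᵥ z := fun z => by
    simpa [dotProduct, mul_comm] using f.toLinearMap.pi_apply_eq_sum_univ z
  have hQu : ∀ a ∈ Q, x ⬝ᵥ a < u := fun a ha => hf a ▸ hfQ a ha
  have hx : x ∈ nonnegOrth n :=
    mem_nonnegOrth_of_bddAbove hcompl hne ⟨u, forall_mem_image.2 fun a ha => (hQu a ha).le⟩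
  obtain ⟨ε, hε, hεy⟩ := exists_pos_mul_lt (sub_pos.2 (hf y ▸ hfy)) (-(1 ⬝ᵥ y))
  have hx' : x + ε • 1 ∈ posOrth n := mem_posOrth.2 fun i => by
    simpa using add_pos_of_nonneg_of_pos (hx i) hε
  have hsupp : supp Q (x + ε • 1) ≤ u := supp_le hne fun a ha => by
    have h1a : (1 : Fin n → ℝ) ⬝ᵥ a ≤ 0 := dotProduct_nonpos (fun _ => zero_le_one) (hQ ha)
    rw [add_dotProduct, smul_dotProduct, smul_eq_mul]
    linarith [mul_nonpos_of_nonneg_of_nonpos hε.le h1a, hQu a ha]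
  have hyx := hy _ hx'
  rw [add_dotProduct, smul_dotProduct, smul_eq_mul] at hyx
  linarith

end Separation

section Equality

variable {Q₀ Q₁ : Set (Fin n → ℝ)}

lemma subset_of_supp_le (h₀ : Q₀ ⊆ nonposOrth n) (h₁ : Q₁ ⊆ nonposOrth n) (h₁ne : Q₁.Nonempty)
    (h₁cl : IsClosed Q₁) (h₁c : Convex ℝ Q₁) (h₁compl : ∀ y ∈ Q₁, ∀ v ∈ nonposOrth n, y + v ∈ Q₁)
    (hle : ∀ x ∈ posOrth n, supp Q₀ x ≤ supp Q₁ x) : Q₀ ⊆ Q₁ := fun _ hy =>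
  mem_of_dotProduct_le_supp h₁ h₁ne h₁cl h₁c h₁compl fun x hx =>
    (dotProduct_le_supp h₀ (posOrth_subset_nonnegOrth hx) hy).trans (hle x hx)

lemma eqOn_supp_of_lintegral_exp_minkComb_eq (h₀ : Q₀ ⊆ nonposOrth n) (h₁ : Q₁ ⊆ nonposOrth n)
    (h₀ne : Q₀.Nonempty) (h₁ne : Q₁.Nonempty) {A B t : ℝ} (hA : 0 < A) (hB : 0 < B)
    (ht₀ : 0 < t) (ht₁ : t < 1)
    (hIA : ∫⁻ x in posOrth n, ENNReal.ofReal (exp (supp Q₀ x)) = ENNReal.ofReal A)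
    (hIB : ∫⁻ x in posOrth n, ENNReal.ofReal (exp (supp Q₁ x)) = ENNReal.ofReal B)
    (hI : ∫⁻ x in posOrth n, ENNReal.ofReal (exp (supp (minkComb t Q₀ Q₁) x))
      = ENNReal.ofReal (A ^ (1 - t) * B ^ t)) :
    EqOn (supp Q₀) (supp Q₁) (posOrth n) := by
  have hc₀ := (continuousOn_supp h₀ h₀ne).rexp
  have hc₁ := (continuousOn_supp h₁ h₁ne).rexp
  have hexp : ∀ x ∈ posOrth n,
      exp (supp (minkComb t Q₀ Q₁) x) = exp (supp Q₀ x) ^ (1 - t) * exp (supp Q₁ x) ^ t :=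
    fun x hx => by
      rw [supp_minkComb h₀ h₁ h₀ne h₁ne ht₀.le ht₁.le (posOrth_subset_nonnegOrth hx),
        mul_comm (1 - t), mul_comm t, exp_add, exp_mul, exp_mul]
  have hae := ae_div_eq_of_lintegral_geom_mean_eq hA hB (hc₀.aemeasurable measurableSet_posOrth)
    (hc₁.aemeasurable measurableSet_posOrth) (fun _ => (exp_pos _).le) (fun _ => (exp_pos _).le)
    ht₀ ht₁ hIA hIB
    (by rw [← hI]; exact setLIntegral_congr_fun measurableSet_posOrth fun x hx => by rw [hexp x hx])
  have hdiv := Measure.eqOn_open_of_ae_eq hae isOpen_posOrth (hc₀.div_const A) (hc₁.div_const B)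
  -- `supp Q₀ - supp Q₁` is constant and positively homogeneous on the orthant, hence zero.
  have hlog : ∀ x ∈ posOrth n, supp Q₀ x - supp Q₁ x = log A - log B := fun x hx => by
    have := congrArg log (hdiv hx)
    simp only [log_div (exp_pos _).ne' hA.ne', log_div (exp_pos _).ne' hB.ne', log_exp] at this
    linarith
  have h₂ := hlog ((2 : ℝ) • 1) (mem_posOrth.2 fun _ => by norm_num)
  rw [supp_smul Q₀ zero_le_two, supp_smul Q₁ zero_le_two] at h₂
  have h₁' := hlog 1 one_mem_posOrth
  exact fun x hx => by linarith [hlog x hx]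

end Equality

end CopolarEquality

open CopolarEquality

theorem covol_copolar_equality_case {n : ℕ} (Q₀ Q₁ : Set (Fin n → ℝ))
    (h₀ : Q₀ ⊆ negOrth n) (h₁ : Q₁ ⊆ negOrth n)
    (h₀ne : Q₀.Nonempty) (h₁ne : Q₁.Nonempty)
    (h₀cl : IsClosed Q₀) (h₁cl : IsClosed Q₁)
    (h₀c : Convex ℝ Q₀) (h₁c : Convex ℝ Q₁)
    (h₀compl : ∀ y ∈ Q₀, ∀ v ∈ nonposOrth n, y + v ∈ Q₀)
    (h₁compl : ∀ y ∈ Q₁, ∀ v ∈ nonposOrth n, y + v ∈ Q₁)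
    (hfin₀ : volume (nonnegOrth n \ copolar Q₀) < ⊤)
    (hfin₁ : volume (nonnegOrth n \ copolar Q₁) < ⊤)
    (t : ℝ) (ht : t ∈ Set.Ioo (0:ℝ) 1)
    (heq : (volume (nonnegOrth n \ copolar (minkComb t Q₀ Q₁))).toReal =
      (volume (nonnegOrth n \ copolar Q₀)).toReal ^ (1 - t) *
      (volume (nonnegOrth n \ copolar Q₁)).toReal ^ t) :
    Q₀ = Q₁ := by
  obtain ⟨ht₀, ht₁⟩ := ht
  have h₀' := h₀.trans negOrth_subset_nonposOrth
  have h₁' := h₁.trans negOrth_subset_nonposOrth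
  set c₀ := (volume (nonnegOrth n \ copolar Q₀)).toReal
  set c₁ := (volume (nonnegOrth n \ copolar Q₁)).toReal
  have hc₀ : 0 < c₀ := ENNReal.toReal_pos (volume_nonnegOrth_diff_copolar_ne_zero h₀' h₀ne) hfin₀.ne
  have hc₁ : 0 < c₁ := ENNReal.toReal_pos (volume_nonnegOrth_diff_copolar_ne_zero h₁' h₁ne) hfin₁.ne
  have hfin : volume (nonnegOrth n \ copolar (minkComb t Q₀ Q₁)) ≠ ⊤ := fun htop => by
    rw [htop, ENNReal.toReal_top] at heq
    exact (mul_pos (Real.rpow_pos_of_pos hc₀ _) (Real.rpow_pos_of_pos hc₁ _)).ne heq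
  have hfac : (0 : ℝ) < n.factorial := Nat.cast_pos.2 n.factorial_pos
  have hscale : (n.factorial * c₀) ^ (1 - t) * (n.factorial * c₁) ^ t
      = n.factorial * (c₀ ^ (1 - t) * c₁ ^ t) := by
    rw [Real.mul_rpow hfac.le hc₀.le, Real.mul_rpow hfac.le hc₁.le, mul_mul_mul_comm,
      ← Real.rpow_add' hfac.le (by norm_num), sub_add_cancel, Real.rpow_one]
  have hsupp := eqOn_supp_of_lintegral_exp_minkComb_eq h₀' h₁' h₀ne h₁ne (mul_pos hfac hc₀)
    (mul_pos hfac hc₁) ht₀ ht₁ (lintegral_exp_supp_eq_ofReal h₀' h₀ne hfin₀.ne)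
    (lintegral_exp_supp_eq_ofReal h₁' h₁ne hfin₁.ne) (by
      rw [lintegral_exp_supp_eq_ofReal (minkComb_subset convex_nonposOrth h₀' h₁' ht₀.le ht₁.le)
        (minkComb_nonempty h₀ne h₁ne t) hfin, heq, hscale])
  exact Subset.antisymm
    (subset_of_supp_le h₀' h₁' h₁ne h₁cl h₁c h₁compl fun x hx => (hsupp hx).le)
    (subset_of_supp_le h₁' h₀' h₀ne h₀cl h₀c h₀compl fun x hx => (hsupp hx).ge)
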